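/- arXiv:math/9509227 — 5 statements merged into one kernel-verified Lean document; each statement's English description precedes it below -/
import Mathlib

section
/- If κ is an infinite strong limit cardinal and B is a Boolean algebra with |B| ≥ κ, then B has an irredundant subset of cardinality κ. -/
open Cardinal

universe u

/-- `S` is (the underlying set of) a Boolean subalgebra. -/
def IsBSub {B : Type u} [BooleanAlgebra B] (S : Set B) : Prop :=
  ⊥ ∈ S ∧ ⊤ ∈ S ∧ (∀ x ∈ S, ∀ y ∈ S, x ⊔ y ∈ S) ∧
    (∀ x ∈ S, ∀ y ∈ S, x ⊓ y ∈ S) ∧ ∀ x ∈ S, xᶜ ∈ S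

/-- The Boolean subalgebra generated by `A`. -/
def BCl {B : Type u} [BooleanAlgebra B] (A : Set B) : Set B :=
  ⋂₀ {S : Set B | IsBSub S ∧ A ⊆ S}

/-- `A` is irredundant: no element is in the subalgebra generated by the others. -/
def Irredundant {B : Type u} [BooleanAlgebra B] (A : Set B) : Prop :=
  ∀ a ∈ A, a ∉ BCl (A \ {a})

section Aux

variable {B : Type u} [BooleanAlgebra B]

lemma subset_BCl (A : Set B) : A ⊆ BCl A := fun x hx =>
  Set.mem_sInter.2 fun _ hS => hS.2 hx

lemma BCl_mono {A A' : Set B} (h : A ⊆ A') : BCl A ⊆ BCl A' := fun x hx =>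
  Set.mem_sInter.2 fun S hS => Set.mem_sInter.1 hx S ⟨hS.1, h.trans hS.2⟩

lemma BCl_subset {A S : Set B} (h1 : IsBSub S) (h2 : A ⊆ S) : BCl A ⊆ S :=
  Set.sInter_subset_of_mem ⟨h1, h2⟩

lemma isBSub_BCl (A : Set B) : IsBSub (BCl A) := by
  refine ⟨?_, ?_, ?_, ?_, ?_⟩
  · exact Set.mem_sInter.2 fun S hS => hS.1.1
  · exact Set.mem_sInter.2 fun S hS => hS.1.2.1
  · intro x hx y hy
    exact Set.mem_sInter.2 fun S hS =>
      hS.1.2.2.1 x (Set.mem_sInter.1 hx S hS) y (Set.mem_sInter.1 hy S hS)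
  · intro x hx y hy
    exact Set.mem_sInter.2 fun S hS =>
      hS.1.2.2.2.1 x (Set.mem_sInter.1 hx S hS) y (Set.mem_sInter.1 hy S hS)
  · intro x hx
    exact Set.mem_sInter.2 fun S hS => hS.1.2.2.2.2 x (Set.mem_sInter.1 hx S hS)

/-- Compactness: membership in `BCl` is witnessed by a finite subset. -/
lemma BCl_finite {S : Set B} {a : B} (ha : a ∈ BCl S) :
    ∃ F : Finset B, ↑F ⊆ S ∧ a ∈ BCl ↑F := by
  classical
  set W : Set B := {a | ∃ F : Finset B, ↑F ⊆ S ∧ a ∈ BCl ↑F} with hW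
  have hsub : IsBSub W := by
    refine ⟨⟨∅, by simp, (isBSub_BCl _).1⟩, ⟨∅, by simp, (isBSub_BCl _).2.1⟩, ?_, ?_, ?_⟩
    · rintro x ⟨F1, hF1, hx⟩ y ⟨F2, hF2, hy⟩
      refine ⟨F1 ∪ F2, by simp [Set.union_subset_iff, hF1, hF2], ?_⟩
      have hx' := BCl_mono (show (F1 : Set B) ⊆ ↑(F1 ∪ F2) by simp [Set.subset_union_left]) hx
      have hy' := BCl_mono (show (F2 : Set B) ⊆ ↑(F1 ∪ F2) by simp [Set.subset_union_right]) hy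
      exact (isBSub_BCl _).2.2.1 x hx' y hy'
    · rintro x ⟨F1, hF1, hx⟩ y ⟨F2, hF2, hy⟩
      refine ⟨F1 ∪ F2, by simp [Set.union_subset_iff, hF1, hF2], ?_⟩
      have hx' := BCl_mono (show (F1 : Set B) ⊆ ↑(F1 ∪ F2) by simp [Set.subset_union_left]) hx
      have hy' := BCl_mono (show (F2 : Set B) ⊆ ↑(F1 ∪ F2) by simp [Set.subset_union_right]) hy
      exact (isBSub_BCl _).2.2.2.1 x hx' y hy'
    · rintro x ⟨F1, hF1, hx⟩
      exact ⟨F1, hF1, (isBSub_BCl _).2.2.2.2 x hx⟩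
  have hSW : S ⊆ W := fun s hs => ⟨{s}, by simpa using hs, subset_BCl _ (by simp)⟩
  exact BCl_subset hsub hSW ha

/-- Cardinality bound for generated subalgebras below a strong limit. -/
lemma mk_BCl_lt {κ : Cardinal.{u}} (hκ : ℵ₀ ≤ κ) (hsl : κ.IsStrongLimit)
    {S : Set B} (hS : #S < κ) : #(BCl S) < κ := by
  classical
  set T : Set B := (S ∪ compl '' S) ∪ {⊥, ⊤} with hT
  have hTcompl : ∀ t ∈ T, tᶜ ∈ T := by
    rintro t (⟨hs | ⟨s, hs, rfl⟩⟩ | hs)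
    · exact Or.inl (Or.inr ⟨t, hs, rfl⟩)
    · exact Or.inl (Or.inl (by simpa using hs))
    · rcases hs with rfl | rfl
      · exact Or.inr (by simp)
      · exact Or.inr (by simp)
  have hTcard : #T < κ := by
    calc #T ≤ #((S ∪ compl '' S : Set B)) + #({⊥, ⊤} : Set B) := mk_union_le _ _
    _ ≤ (#S + #(compl '' S)) + #({⊥, ⊤} : Set B) := by
        gcongr; exact mk_union_le _ _
    _ < κ := by
        apply Cardinal.add_lt_of_lt hκ
        · exact Cardinal.add_lt_of_lt hκ hS ((mk_image_le).trans_lt hS)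
        · exact lt_of_lt_of_le (lt_aleph0_of_finite _) hκ
  set L : Set B := ⋂₀ {X : Set B | T ⊆ X ∧ (∀ x ∈ X, ∀ y ∈ X, x ⊔ y ∈ X) ∧
      (∀ x ∈ X, ∀ y ∈ X, x ⊓ y ∈ X)} with hL
  have hTL : T ⊆ L := fun t ht => Set.mem_sInter.2 fun X hX => hX.1 ht
  have hLsup : ∀ x ∈ L, ∀ y ∈ L, x ⊔ y ∈ L := fun x hx y hy =>
    Set.mem_sInter.2 fun X hX =>
      hX.2.1 x (Set.mem_sInter.1 hx X hX) y (Set.mem_sInter.1 hy X hX)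
  have hLinf : ∀ x ∈ L, ∀ y ∈ L, x ⊓ y ∈ L := fun x hx y hy =>
    Set.mem_sInter.2 fun X hX =>
      hX.2.2 x (Set.mem_sInter.1 hx X hX) y (Set.mem_sInter.1 hy X hX)
  have hLcompl : ∀ x ∈ L, xᶜ ∈ L := by
    have : L ⊆ {x | xᶜ ∈ L} := by
      apply Set.sInter_subset_of_mem
      refine ⟨fun t ht => hTL (hTcompl t ht), ?_, ?_⟩
      · intro x hx y hy
        show (x ⊔ y)ᶜ ∈ L
        rw [compl_sup]; exact hLinf _ hx _ hy
      · intro x hx y hy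
        show (x ⊓ y)ᶜ ∈ L
        rw [compl_inf]; exact hLsup _ hx _ hy
    exact fun x hx => this hx
  have hLB : IsBSub L :=
    ⟨hTL (Or.inr (by simp)), hTL (Or.inr (by simp)), hLsup, hLinf, hLcompl⟩
  have hBClL : BCl S ⊆ L := BCl_subset hLB fun s hs => hTL (Or.inl (Or.inl hs))
  set Φ : Finset (Finset ↥T) → B :=
    fun F => F.sup fun G => (G.image Subtype.val).inf id with hΦ
  have hLR : L ⊆ Set.range Φ := by
    apply Set.sInter_subset_of_mem
    refine ⟨?_, ?_, ?_⟩
    · intro t ht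
      exact ⟨{{⟨t, ht⟩}}, by simp [hΦ]⟩
    · rintro x ⟨F1, rfl⟩ y ⟨F2, rfl⟩
      exact ⟨F1 ∪ F2, Finset.sup_union⟩
    · rintro x ⟨F1, rfl⟩ y ⟨F2, rfl⟩
      refine ⟨(F1 ×ˢ F2).image fun p => p.1 ∪ p.2, ?_⟩
      show ((F1 ×ˢ F2).image fun p => p.1 ∪ p.2).sup (fun G => (G.image Subtype.val).inf id) = _
      rw [Finset.sup_image, Finset.sup_inf_sup]
      apply Finset.sup_congr rfl
      intro p _
      show ((p.1 ∪ p.2).image Subtype.val).inf id = _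
      rw [Finset.image_union, Finset.inf_union]
  have hle : #(BCl S) ≤ #(Finset (Finset ↥T)) := by
    calc #(BCl S) ≤ #(Set.range Φ) := mk_le_mk_of_subset (hBClL.trans hLR)
    _ ≤ #(Finset (Finset ↥T)) := mk_range_le
  apply hle.trans_lt
  have h1 : #(Finset ↥T) ≤ 2 ^ #T :=
    (mk_le_of_injective (α := Finset ↥T) (β := Set ↥T) Finset.coe_injective).trans_eq mk_set
  have h2 : #(Finset (Finset ↥T)) ≤ (2 : Cardinal) ^ ((2 : Cardinal) ^ #T) := by
    refine (mk_le_of_injective (α := Finset (Finset ↥T)) (β := Set (Finset ↥T))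
      Finset.coe_injective).trans ?_
    rw [mk_set]
    exact power_le_power_left (a := (2 : Cardinal)) two_ne_zero h1
  exact h2.trans_lt (hsl.two_power_lt (hsl.two_power_lt hTcard))

/-- Key existence lemma. -/
lemma key_exists {κ : Cardinal.{u}} (hκ : ℵ₀ ≤ κ) (hsl : κ.IsStrongLimit) (hB : κ ≤ #B)
    {S : Set B} (hS : #S < κ) :
    ∃ b : B, b ≠ ⊤ ∧ ∀ c ∈ BCl S, b ≤ c → c = ⊤ := by
  have hC : #(BCl S) < κ := mk_BCl_lt hκ hsl hS
  by_contra hcon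
  push_neg at hcon
  have hdense : ∀ d : B, d ≠ ⊥ → ∃ c ∈ BCl S, c ≠ ⊥ ∧ c ≤ d := by
    intro d hd
    obtain ⟨c, hc, hbc, hcne⟩ := hcon dᶜ (by simpa using hd)
    refine ⟨cᶜ, (isBSub_BCl S).2.2.2.2 c hc, by simpa using hcne,
      by simpa using compl_le_compl hbc⟩
  have hinj : Function.Injective (fun b : B => {c : ↥(BCl S) | (c : B) ≤ b}) := by
    intro b b' h
    by_contra hne
    have hcases : b ⊓ b'ᶜ ≠ ⊥ ∨ b' ⊓ bᶜ ≠ ⊥ := by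
      by_contra hcc
      push_neg at hcc
      have h1 : b ≤ b' := by
        have := hcc.1; rwa [← sdiff_eq, sdiff_eq_bot_iff] at this
      have h2 : b' ≤ b := by
        have := hcc.2; rwa [← sdiff_eq, sdiff_eq_bot_iff] at this
      exact hne (le_antisymm h1 h2)
    have main : ∀ u v : B, ({c : ↥(BCl S) | (c : B) ≤ u} = {c : ↥(BCl S) | (c : B) ≤ v}) →
        u ⊓ vᶜ ≠ ⊥ → False := by
      intro u v huv hd
      obtain ⟨c, hc, hcne, hcle⟩ := hdense _ hd
      have hcu : c ≤ u := hcle.trans inf_le_left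
      have hcv' : c ≤ vᶜ := hcle.trans inf_le_right
      have hmem : (⟨c, hc⟩ : ↥(BCl S)) ∈ {c : ↥(BCl S) | (c : B) ≤ u} := hcu
      rw [huv] at hmem
      exact hcne (le_bot_iff.1 ((le_inf hmem hcv').trans_eq inf_compl_eq_bot))
    rcases hcases with hd | hd
    · exact main b b' h hd
    · exact main b' b h.symm hd
  have hle : #B ≤ 2 ^ #(BCl S) := by
    have := mk_le_of_injective hinj
    rwa [mk_set] at this
  exact absurd (hB.trans hle) (not_le.2 (hsl.two_power_lt hC))

lemma eq_of_parts {b u v : B} (h1 : u ⊓ b = v ⊓ b) (h2 : u ⊓ bᶜ = v ⊓ bᶜ) : u = v := by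
  have : u ⊓ (b ⊔ bᶜ) = v ⊓ (b ⊔ bᶜ) := by
    rw [inf_sup_left, inf_sup_left, h1, h2]
  simpa using this

lemma nf_inf_b (b x y : B) : (x ⊓ b ⊔ y ⊓ bᶜ) ⊓ b = x ⊓ b := by
  simp [inf_sup_right, inf_assoc]

lemma nf_inf_bc (b x y : B) : (x ⊓ b ⊔ y ⊓ bᶜ) ⊓ bᶜ = y ⊓ bᶜ := by
  simp [inf_sup_right, inf_assoc]

lemma inf_part (b u v : B) : (u ⊓ v) ⊓ b = (u ⊓ b) ⊓ (v ⊓ b) := by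
  rw [inf_inf_inf_comm, inf_idem]

/-- Normal form with respect to one extra generator. -/
lemma normal_form {E : Set B} {b a : B} (ha : a ∈ BCl (insert b E)) :
    ∃ x ∈ BCl E, ∃ y ∈ BCl E, a = x ⊓ b ⊔ y ⊓ bᶜ := by
  set M : Set B := {a | ∃ x ∈ BCl E, ∃ y ∈ BCl E, a = x ⊓ b ⊔ y ⊓ bᶜ} with hM
  have hE := isBSub_BCl E
  have hBM : IsBSub M := by
    refine ⟨⟨⊥, hE.1, ⊥, hE.1, by simp⟩, ⟨⊤, hE.2.1, ⊤, hE.2.1, by simp⟩, ?_, ?_, ?_⟩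
    · rintro _ ⟨x, hx, y, hy, rfl⟩ _ ⟨x', hx', y', hy', rfl⟩
      refine ⟨x ⊔ x', hE.2.2.1 _ hx _ hx', y ⊔ y', hE.2.2.1 _ hy _ hy', ?_⟩
      apply eq_of_parts (b := b)
      · rw [inf_sup_right, nf_inf_b, nf_inf_b, nf_inf_b, inf_sup_right]
      · rw [inf_sup_right, nf_inf_bc, nf_inf_bc, nf_inf_bc, inf_sup_right]
    · rintro _ ⟨x, hx, y, hy, rfl⟩ _ ⟨x', hx', y', hy', rfl⟩
      refine ⟨x ⊓ x', hE.2.2.2.1 _ hx _ hx', y ⊓ y', hE.2.2.2.1 _ hy _ hy', ?_⟩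
      apply eq_of_parts (b := b)
      · rw [inf_part, nf_inf_b, nf_inf_b, nf_inf_b, ← inf_part]
      · rw [inf_part, nf_inf_bc, nf_inf_bc, nf_inf_bc, ← inf_part]
    · rintro _ ⟨x, hx, y, hy, rfl⟩
      refine ⟨xᶜ, hE.2.2.2.2 _ hx, yᶜ, hE.2.2.2.2 _ hy, ?_⟩
      apply eq_of_parts (b := b)
      · rw [nf_inf_b, compl_sup, compl_inf, compl_inf, compl_compl, inf_part,
          inf_sup_right, inf_sup_right]
        simp [inf_assoc]
      · rw [nf_inf_bc, compl_sup, compl_inf, compl_inf, compl_compl, inf_part,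
          inf_sup_right, inf_sup_right]
        have h : (yᶜ ⊔ b) ⊓ bᶜ = yᶜ ⊓ bᶜ := by simp [inf_sup_right]
        simp [inf_assoc, h, sup_eq_right.2 (inf_le_right (a := xᶜ))]
  have hsub : insert b E ⊆ M := by
    rintro t (rfl | ht)
    · exact ⟨⊤, hE.2.1, ⊥, hE.1, by simp⟩
    · refine ⟨t, subset_BCl E ht, t, subset_BCl E ht, ?_⟩
      rw [← inf_sup_left]
      simp
  exact BCl_subset hBM hsub ha

end Aux

/-- If `κ` is an infinite strong limit cardinal and `B` is a Boolean algebra of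
cardinality at least `κ`, then `B` has an irredundant subset of cardinality `κ`. -/
theorem stmt_2 (B : Type u) [BooleanAlgebra B] (κ : Cardinal.{u})
    (hκ : ℵ₀ ≤ κ) (hsl : κ.IsStrongLimit) (hB : κ ≤ #B) :
    ∃ A : Set B, Irredundant A ∧ #A = κ := by
  classical
  have hne : Nonempty κ.ord.ToType := by
    rw [← mk_ne_zero_iff, mk_ord_toType]
    exact fun h => (aleph0_pos.trans_le hκ).ne' h
  have wf : WellFounded ((· < ·) : κ.ord.ToType → κ.ord.ToType → Prop) := IsWellFounded.wf
  have key' : ∀ (i : κ.ord.ToType) (g : ∀ j, j < i → B),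
      ∃ b : B, b ≠ ⊤ ∧ ∀ c ∈ BCl {x | ∃ j, ∃ hj : j < i, g j hj = x}, b ≤ c → c = ⊤ := by
    intro i g
    apply key_exists hκ hsl hB
    have heq : {x | ∃ j, ∃ hj : j < i, g j hj = x}
        = Set.range (fun j : Set.Iio i => g j.1 j.2) := by
      ext x
      simp [Set.mem_range, Subtype.exists]
    rw [heq]
    exact mk_range_le.trans_lt (mk_Iio_ord_toType i)
  let f : κ.ord.ToType → B := wf.fix fun i g => Classical.choose (key' i g)
  have hfix : ∀ i, f i = Classical.choose (key' i fun j _ => f j) := fun i =>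
    wf.fix_eq _ i
  have hP : ∀ i, f i ≠ ⊤ ∧ ∀ c ∈ BCl (f '' Set.Iio i), f i ≤ c → c = ⊤ := by
    intro i
    obtain ⟨h1, h2⟩ := Classical.choose_spec (key' i fun j _ => f j)
    rw [← hfix i] at h1 h2
    refine ⟨h1, fun c hc hle => h2 c ?_ hle⟩
    have hss : f '' Set.Iio i ⊆ {x | ∃ j, ∃ hj : j < i, f j = x} := by
      rintro x ⟨j, hj, rfl⟩
      exact ⟨j, hj, rfl⟩
    exact BCl_mono hss hc
  have hnotmem : ∀ i, f i ∉ BCl (f '' Set.Iio i) := fun i h =>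
    (hP i).1 ((hP i).2 _ h le_rfl)
  have hinj : Function.Injective f := by
    intro i j hij
    by_contra hne'
    rcases lt_or_gt_of_ne hne' with h | h
    · exact hnotmem j (subset_BCl _ ⟨i, h, hij⟩)
    · exact hnotmem i (subset_BCl _ ⟨j, h, hij.symm⟩)
  refine ⟨Set.range f, ?_, by rw [mk_range_eq f hinj, mk_ord_toType]⟩
  -- main elimination lemma
  have main : ∀ (n : ℕ) (i : κ.ord.ToType) (Fi : Finset κ.ord.ToType), Fi.card = n →
      i ∉ Fi → f i ∈ BCl (f '' ↑Fi) → False := by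
    intro n
    induction n with
    | zero =>
      intro i Fi hcard hiF hmemF
      rw [Finset.card_eq_zero] at hcard
      subst hcard
      exact hnotmem i (BCl_mono (by simp) hmemF)
    | succ n ih =>
      intro i Fi hcard hiF hmemF
      by_cases hall : ∀ j ∈ Fi, j < i
      · refine hnotmem i (BCl_mono ?_ hmemF)
        rintro x ⟨j, hj, rfl⟩
        exact ⟨j, hall j hj, rfl⟩
      · push_neg at hall
        obtain ⟨j0, hj0F, hj0⟩ := hall
        have hij0 : i < j0 :=
          lt_of_le_of_ne hj0 fun h => hiF (by rw [h]; exact hj0F)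
        set Fgt := Fi.filter (fun j => i < j) with hFgt
        have hne2 : Fgt.Nonempty := ⟨j0, Finset.mem_filter.2 ⟨hj0F, hij0⟩⟩
        set m := Fgt.max' hne2 with hm
        have hmmem := Fgt.max'_mem hne2
        have hmFi : m ∈ Fi := (Finset.mem_filter.1 hmmem).1
        have him : i < m := (Finset.mem_filter.1 hmmem).2
        have hlt : ∀ j ∈ Fi.erase m, j < m := by
          intro j hj
          have hjFi := Finset.mem_of_mem_erase hj
          have hjm : j ≠ m := Finset.ne_of_mem_erase hj
          rcases lt_trichotomy j i with h | h | h
          · exact h.trans him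
          · exact absurd (h ▸ hjFi) hiF
          · exact lt_of_le_of_ne (Fgt.le_max' j (Finset.mem_filter.2 ⟨hjFi, h⟩)) hjm
        have hins : (f '' ↑Fi) = insert (f m) (f '' ↑(Fi.erase m)) := by
          conv_lhs => rw [← Finset.insert_erase hmFi]
          rw [Finset.coe_insert, Set.image_insert_eq]
        rw [hins] at hmemF
        obtain ⟨x, hx, y, hy, he⟩ := normal_form hmemF
        have hEsub : f '' ↑(Fi.erase m) ⊆ f '' Set.Iio m := by
          rintro z ⟨j, hj, rfl⟩
          exact ⟨j, hlt j hj, rfl⟩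
        have haIio : f i ∈ BCl (f '' Set.Iio m) := subset_BCl _ ⟨i, him, rfl⟩
        have hxIio : x ∈ BCl (f '' Set.Iio m) := BCl_mono hEsub hx
        have hBm := isBSub_BCl (f '' Set.Iio m)
        have hδmem : (f i ⊓ xᶜ) ⊔ (x ⊓ (f i)ᶜ) ∈ BCl (f '' Set.Iio m) :=
          hBm.2.2.1 _ (hBm.2.2.2.1 _ haIio _ (hBm.2.2.2.2 _ hxIio)) _
            (hBm.2.2.2.1 _ hxIio _ (hBm.2.2.2.2 _ haIio))
        have hab : f i ⊓ f m = x ⊓ f m := by rw [he]; exact nf_inf_b _ _ _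
        have hδb : ((f i ⊓ xᶜ) ⊔ (x ⊓ (f i)ᶜ)) ⊓ f m = ⊥ := by
          rw [inf_sup_right]
          have e1 : f i ⊓ xᶜ ⊓ f m = ⊥ := by
            rw [inf_right_comm, hab, inf_right_comm, inf_compl_self, bot_inf_eq]
          have e2 : x ⊓ (f i)ᶜ ⊓ f m = ⊥ := by
            rw [inf_right_comm, ← hab, inf_right_comm, inf_compl_self, bot_inf_eq]
          rw [e1, e2, bot_sup_eq]
        have hble : f m ≤ ((f i ⊓ xᶜ) ⊔ (x ⊓ (f i)ᶜ))ᶜ := by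
          have hcalc : f m = f m ⊓ ((f i ⊓ xᶜ) ⊔ (x ⊓ (f i)ᶜ))ᶜ := by
            conv_lhs => rw [← inf_top_eq (f m),
              ← sup_compl_eq_top (x := (f i ⊓ xᶜ) ⊔ (x ⊓ (f i)ᶜ))]
            rw [inf_sup_left, inf_comm (f m), hδb, bot_sup_eq]
          rw [hcalc]
          exact inf_le_right
        have hδtop : ((f i ⊓ xᶜ) ⊔ (x ⊓ (f i)ᶜ))ᶜ = ⊤ :=
          (hP m).2 _ (hBm.2.2.2.2 _ hδmem) hble
        have hδbot : (f i ⊓ xᶜ) ⊔ (x ⊓ (f i)ᶜ) = ⊥ := by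
          rw [← compl_compl ((f i ⊓ xᶜ) ⊔ (x ⊓ (f i)ᶜ)), hδtop, compl_top]
        have hax : f i = x := by
          rw [sup_eq_bot_iff] at hδbot
          have l1 : f i ≤ x := by
            rw [← sdiff_eq_bot_iff, sdiff_eq]
            exact hδbot.1
          have l2 : x ≤ f i := by
            rw [← sdiff_eq_bot_iff, sdiff_eq]
            exact hδbot.2
          exact le_antisymm l1 l2
        refine ih i (Fi.erase m) ?_ (fun h => hiF (Finset.mem_of_mem_erase h)) ?_
        · rw [Finset.card_erase_of_mem hmFi, hcard]
          rfl
        · rw [hax]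
          exact hx
  -- irredundance
  intro a ha hmem
  obtain ⟨i, rfl⟩ := ha
  obtain ⟨F, hF, hFm⟩ := BCl_finite hmem
  have hfg : ∀ x ∈ F, f (Function.invFun f x) = x := by
    intro x hx
    exact Function.invFun_eq (hF hx).1
  have hGim : f '' ↑(F.image (Function.invFun f)) = ↑F := by
    ext x
    constructor
    · rintro ⟨j, hj, rfl⟩
      rw [Finset.coe_image] at hj
      obtain ⟨x', hx', rfl⟩ := hj
      rw [hfg x' hx']
      exact hx'
    · intro hx
      exact ⟨Function.invFun f x, by
        rw [Finset.coe_image]; exact ⟨x, hx, rfl⟩, hfg x hx⟩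
  have hiG : i ∉ F.image (Function.invFun f) := by
    intro hi
    obtain ⟨x, hx, hxi⟩ := Finset.mem_image.1 hi
    have hxe : f i = x := by rw [← hxi]; exact hfg x hx
    exact (hF hx).2 (by rw [← hxe]; rfl)
  exact main _ i (F.image (Function.invFun f)) rfl hiG (by rw [hGim]; exact hFm)
end

section
/- Let μ be a singular strong limit cardinal and M = (M, F) an algebra with μ ≤ |M| < 2^μ and |F| < μ. Then M has at least 2^μ subalgebras. -/
open Cardinal

universe u

/-- An algebra: a carrier `M` with a set of finitary operations (for each arity `n`,
a set of `n`-ary functions). -/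
structure FAlg (M : Type u) where
  ops : ∀ n : ℕ, Set ((Fin n → M) → M)

/-- `S` is a subalgebra: closed under all operations. -/
def FAlg.IsSubalg {M : Type u} (A : FAlg M) (S : Set M) : Prop :=
  ∀ ⦃n : ℕ⦄, ∀ f ∈ A.ops n, ∀ x : Fin n → M, (∀ i, x i ∈ S) → f x ∈ S

/-- The least subalgebra containing `B`. -/
def FAlg.Cl {M : Type u} (A : FAlg M) (B : Set M) : Set M :=
  ⋂₀ {S : Set M | A.IsSubalg S ∧ B ⊆ S}

/-- `B` is free for the algebra `A`. -/
def FAlg.IsFree {M : Type u} (A : FAlg M) (B : Set M) : Prop :=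
  ∀ a ∈ B, a ∉ A.Cl (B \ {a})

/-- The number of operations of the algebra. -/
def FAlg.opsCard {M : Type u} (A : FAlg M) : Cardinal.{u} :=
  #(Σ n : ℕ, ↥(A.ops n))

/- ===== auxiliary material ===== -/

open FirstOrder FirstOrder.Language

/-- The first-order language associated to an algebra. -/
def FAlg.lang {M : Type u} (A : FAlg M) : FirstOrder.Language.{u, 0} :=
  ⟨fun n => ↥(A.ops n), fun _ => Empty⟩

/-- The canonical structure of `M` in the language of the algebra. -/
def FAlg.str {M : Type u} (A : FAlg M) : A.lang.Structure M :=
  ⟨fun f x => f.1 x, fun r => r.elim⟩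

/-- Key: for any set `s`, there is a subalgebra containing `s` of controlled size. -/
lemma FAlg.exists_small_subalg {M : Type u} (A : FAlg M) (s : Set M) :
    ∃ T : Set M, A.IsSubalg T ∧ s ⊆ T ∧ #T ≤ max ℵ₀ (#s + A.opsCard) := by
  letI := A.str
  refine ⟨(Substructure.closure A.lang s : Set M), ?_, Substructure.subset_closure, ?_⟩
  · intro n f hf x hx
    exact (Substructure.closure A.lang s).fun_mem (n := n) ⟨f, hf⟩ x hx
  · have h := Substructure.lift_card_closure_le (L := A.lang) (M := M) (s := s)
    rw [Cardinal.lift_id, Cardinal.lift_id, Cardinal.lift_id] at h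
    exact h

/-- For a limit cardinal `μ` that is a strong limit, `2 ^ μ ≤ μ ^ cof (μ.ord)`. -/
lemma two_power_le_power_cof (μ : Cardinal.{u}) (hsl : μ.IsStrongLimit) :
    2 ^ μ ≤ μ ^ (μ.ord.cof) := by
  obtain ⟨ι, f, hlsub, hmk⟩ := Ordinal.exists_lsub_cof μ.ord
  set g : ι → Cardinal.{u} := fun i => (f i).card with hg
  have hμ : μ ≤ Cardinal.sum g := by
    by_contra hlt
    push_neg at hlt
    have h1 : Order.succ (Cardinal.sum g) < μ :=
      hsl.isSuccLimit.succ_lt hlt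
    have h2 : (Order.succ (Cardinal.sum g)).ord < Ordinal.lsub f := by
      rw [hlsub]
      exact Cardinal.ord_lt_ord.2 h1
    obtain ⟨i, hi⟩ := Ordinal.lt_lsub_iff.1 h2
    have h3 : Order.succ (Cardinal.sum g) ≤ g i := by
      have := Ordinal.card_le_card hi
      rwa [Cardinal.card_ord] at this
    have h4 : g i ≤ Cardinal.sum g := Cardinal.le_sum g i
    exact absurd (h3.trans h4) (by simp)
  calc 2 ^ μ ≤ 2 ^ Cardinal.sum g := Cardinal.power_le_power_left two_ne_zero hμ
    _ = Cardinal.prod (fun i => (2 : Cardinal) ^ g i) := Cardinal.power_sum 2 g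
    _ ≤ Cardinal.prod (fun _ : ι => μ) := by
        refine Cardinal.prod_le_prod _ _ fun i => ?_
        refine (hsl.two_power_lt ?_).le
        rw [hg]
        exact Cardinal.lt_ord.1 (hlsub ▸ Ordinal.lt_lsub f i)
    _ = μ ^ #ι := Cardinal.prod_const' ι μ
    _ = μ ^ (μ.ord.cof) := by rw [hmk]

/-- If `μ` is a singular strong limit cardinal and `M` is an algebra with
`μ ≤ |M| < 2^μ` and fewer than `μ` operations, then `M` has at least `2^μ` subalgebras. -/
theorem stmt_5 (μ : Cardinal.{u}) (hsl : μ.IsStrongLimit) (hsing : μ.ord.cof < μ)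
    (M : Type u) (alg : FAlg M) (h1 : μ ≤ #M) (h2 : #M < 2 ^ μ)
    (h3 : alg.opsCard < μ) :
    2 ^ μ ≤ #{S : Set M // alg.IsSubalg S} := by
  classical
  set κ : Cardinal.{u} := μ.ord.cof with hκ
  set ι : Type u := κ.ord.ToType with hι
  have hmkι : #ι = κ := by exact Cardinal.mk_ord_toType κ
  -- the map sending a κ-sequence to the subalgebra generated by its range
  have key := fun g : ι → M => alg.exists_small_subalg (Set.range g)
  choose T hT hsub hcard using key
  set Φ : (ι → M) → {S : Set M // alg.IsSubalg S} := fun g => ⟨T g, hT g⟩ with hΦ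
  -- the bound λ on the size of generated subalgebras
  set lam : Cardinal.{u} := max ℵ₀ (κ + alg.opsCard) with hlam
  have hμinf : ℵ₀ ≤ μ := hsl.aleph0_le
  have hlamlt : lam < μ := by
    rw [hlam]
    have haleph : ℵ₀ < μ :=
      lt_of_le_of_lt (Ordinal.aleph0_le_cof.2 (Cardinal.isSuccLimit_ord hμinf)) hsing
    exact max_lt haleph (Cardinal.add_lt_of_lt hμinf hsing h3)
  -- each fiber of Φ has size < μ
  have hfiber : ∀ S : {S : Set M // alg.IsSubalg S}, #(Φ ⁻¹' {S}) ≤ μ := by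
    intro S
    rcases Set.eq_empty_or_nonempty (Φ ⁻¹' {S}) with he | ⟨g₀, hg₀⟩
    · rw [he]
      simpa using hμinf.trans' (by simp)
    · have hSsmall : #(S : Set M) ≤ lam := by
        have : T g₀ = (S : Set M) := congrArg Subtype.val hg₀
        rw [← this]
        refine (hcard g₀).trans ?_
        rw [hlam]
        gcongr
        exact Cardinal.mk_range_le.trans hmkι.le
      -- inject the fiber into ι → S
      have hinj : #(Φ ⁻¹' {S}) ≤ #(ι → (S : Set M)) := by
        refine Cardinal.mk_le_of_injective (f := fun p i =>
          (⟨p.1 i, ?_⟩ : (S : Set M))) ?_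
        · have hmem : Φ p.1 = S := p.2
          have : T p.1 = (S : Set M) := congrArg Subtype.val hmem
          rw [← this]
          exact hsub p.1 ⟨i, rfl⟩
        · intro p q hpq
          ext i
          exact congrArg Subtype.val (congrFun hpq i)
      refine hinj.trans ?_
      have : #(ι → (S : Set M)) = #(S : Set M) ^ κ := by
        rw [← Cardinal.power_def, hmkι]
      rw [this]
      calc #(S : Set M) ^ κ ≤ (2 ^ lam) ^ κ :=
            Cardinal.power_le_power_right (hSsmall.trans (Cardinal.cantor lam).le)
        _ = 2 ^ (lam * κ) := by rw [← Cardinal.power_mul]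
        _ ≤ μ := (hsl.two_power_lt (Cardinal.mul_lt_of_lt hμinf hlamlt hsing)).le
  -- counting
  have hdom : 2 ^ μ ≤ #(ι → M) := by
    have e : #(ι → M) = #M ^ κ := by rw [← Cardinal.power_def, hmkι]
    rw [e]
    exact (two_power_le_power_cof μ hsl).trans (Cardinal.power_le_power_right h1)
  have hcount : #(ι → M) ≤ #{S : Set M // alg.IsSubalg S} * μ :=
    Cardinal.mk_le_mk_mul_of_mk_preimage_le Φ hfiber
  by_contra hcon
  push_neg at hcon
  have : #{S : Set M // alg.IsSubalg S} * μ < 2 ^ μ :=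
    Cardinal.mul_lt_of_lt (hμinf.trans (Cardinal.cantor μ).le) hcon (Cardinal.cantor μ)
  exact absurd ((hdom.trans hcount).trans_lt this) (lt_irrefl _)
end

section
/- Suppose the principle (*) holds: (S1) for every infinite cardinal κ, 2^κ is weakly inaccessible and 2^λ = 2^κ whenever κ ≤ λ < 2^κ; (S2) for every infinite cardinal κ, Pr(2^κ) holds. Then every infinite Boolean algebra B has an irredundant subset A with 2^|A| = 2^|B|. -/
open Cardinal

universe u

/-- `Pr κ`: every algebra on a set of size `κ` with fewer than `κ` operations has a
free subset of cardinality `κ`. -/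
def Pr (κ : Cardinal.{u}) : Prop :=
  ∀ (M : Type u) (A : FAlg M), #M = κ → A.opsCard < κ →
    ∃ B : Set M, A.IsFree B ∧ #B = κ

/-- `c` is weakly inaccessible: an uncountable regular limit cardinal. -/
def WInacc (c : Cardinal.{u}) : Prop :=
  ℵ₀ < c ∧ c.IsRegular ∧ Order.IsSuccLimit c

/-!
Let `σ` be the least infinite cardinal with `2 ^ σ = 2 ^ #B`.

If `2 ^ θ < σ` for every infinite `θ < σ`, take a maximal irredundant set `M` (Zorn). Its
generated subalgebra is dense, so `#B ≤ 2 ^ #M`; this forces `σ ≤ #M ≤ #B`, whence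
`2 ^ #M = 2 ^ #B`.

Otherwise some infinite `θ < σ` has `σ ≤ 2 ^ θ`. By (S1) at `θ` and the minimality of `σ`,
`2 ^ θ ≤ #B`, and `Pr (2 ^ θ)`, applied to the Boolean operations of a subalgebra of size `2 ^ θ`,
yields a free, i.e. irredundant, set `A` of size `2 ^ θ`. As `σ ≤ 2 ^ θ < 2 ^ σ`, (S1) at `σ`
gives `2 ^ #A = 2 ^ σ = 2 ^ #B`.
-/

open FirstOrder Language

namespace FAlg

variable {M : Type u} (A : FAlg M)

/-- Read as a first-order language, so that `A.Cl` inherits the cardinality bound of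
substructure closures. -/
def language : Language where
  Functions n := A.ops n
  Relations _ := Empty

instance : A.language.Structure M where
  funMap f x := f.1 x
  RelMap r := r.elim

theorem Cl_subset_closure (S : Set M) : A.Cl S ⊆ Substructure.closure A.language S :=
  Set.sInter_subset_of_mem
    ⟨fun _ f hf x hx => (Substructure.closure A.language S).fun_mem ⟨f, hf⟩ x hx,
      Substructure.subset_closure⟩

theorem mk_Cl_le (S : Set M) : #(A.Cl S) ≤ max ℵ₀ (#S + A.opsCard) := by
  refine (mk_le_mk_of_subset (A.Cl_subset_closure S)).trans ?_
  have := Substructure.lift_card_closure_le (L := A.language) (s := S)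
  rwa [lift_id, lift_id, lift_id] at this

end FAlg

def boolFAlg (α : Type u) [BooleanAlgebra α] : FAlg α where
  ops
    | 0 => {fun _ => ⊥, fun _ => ⊤}
    | 1 => {fun x => (x 0)ᶜ}
    | 2 => {fun x => x 0 ⊔ x 1, fun x => x 0 ⊓ x 1}
    | _ => ∅

section Boolean

variable {α : Type u} [BooleanAlgebra α]

theorem isSubalg_boolFAlg_iff {S : Set α} : (boolFAlg α).IsSubalg S ↔ IsBSub S := by
  constructor
  · intro h
    refine ⟨h (n := 0) _ (Or.inl rfl) Fin.elim0 (fun i => i.elim0),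
      h (n := 0) _ (Or.inr rfl) Fin.elim0 (fun i => i.elim0),
      fun x hx y hy => ?_, fun x hx y hy => ?_, fun x hx => ?_⟩
    · exact h (n := 2) _ (Or.inl rfl) ![x, y] (Fin.forall_fin_two.2 ⟨hx, hy⟩)
    · exact h (n := 2) _ (Or.inr rfl) ![x, y] (Fin.forall_fin_two.2 ⟨hx, hy⟩)
    · exact h (n := 1) _ rfl ![x] (Fin.forall_fin_one.2 hx)
  · rintro ⟨hbot, htop, hsup, hinf, hcompl⟩ (_ | _ | _ | n) f hf x hx
    · rcases hf with rfl | rfl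
      exacts [hbot, htop]
    · rcases hf with rfl
      exact hcompl _ (hx 0)
    · rcases hf with rfl | rfl
      exacts [hsup _ (hx 0) _ (hx 1), hinf _ (hx 0) _ (hx 1)]
    · exact hf.elim

theorem Cl_boolFAlg (S : Set α) : (boolFAlg α).Cl S = BCl S := by
  simp only [FAlg.Cl, BCl, isSubalg_boolFAlg_iff]

theorem isFree_boolFAlg_iff {A : Set α} : (boolFAlg α).IsFree A ↔ Irredundant A := by
  simp only [FAlg.IsFree, Irredundant, Cl_boolFAlg]

theorem opsCard_boolFAlg_le : (boolFAlg α).opsCard ≤ ℵ₀ := by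
  have (n : ℕ) : Countable ((boolFAlg α).ops n) := by
    rcases n with _ | _ | _ | n <;> exact Set.Countable.to_subtype (by simp [boolFAlg])
  exact mk_le_aleph0

theorem mk_BCl_le (S : Set α) : #(BCl S) ≤ max ℵ₀ #S := by
  rw [← Cl_boolFAlg]
  refine ((boolFAlg α).mk_Cl_le S).trans (max_le le_sup_left ?_)
  exact add_le_of_le le_sup_left le_sup_right (opsCard_boolFAlg_le.trans le_sup_left)

open BooleanSubalgebra

theorem IsBSub.exists_booleanSubalgebra {S : Set α} (h : IsBSub S) :
    ∃ L : BooleanSubalgebra α, (L : Set α) = S :=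
  ⟨{ carrier := S, supClosed' := fun _ hx _ hy => h.2.2.1 _ hx _ hy,
     infClosed' := fun _ hx _ hy => h.2.2.2.1 _ hx _ hy,
     compl_mem' := fun hx => h.2.2.2.2 _ hx, bot_mem' := h.1 }, rfl⟩

theorem BCl_eq_closure (S : Set α) : BCl S = closure S := by
  refine subset_antisymm (Set.sInter_subset_of_mem ⟨?_, BooleanSubalgebra.subset_closure⟩) ?_
  · exact ⟨bot_mem, top_mem, fun _ hx _ hy => sup_mem hx hy, fun _ hx _ hy => inf_mem hx hy,
      fun _ hx => compl_mem hx⟩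
  · rintro x hx T ⟨hT, hST⟩
    obtain ⟨L, rfl⟩ := hT.exists_booleanSubalgebra
    exact closure_le.2 hST hx

theorem irredundant_iff {A : Set α} : Irredundant A ↔ ∀ a ∈ A, a ∉ closure (A \ {a}) := by
  simp only [Irredundant, BCl_eq_closure, SetLike.mem_coe]

theorem Irredundant.image {β : Type u} [BooleanAlgebra β] {f : BoundedLatticeHom α β}
    (hf : Function.Injective f) {A : Set α} (hA : Irredundant A) : Irredundant (f '' A) := by
  rw [irredundant_iff] at hA ⊢
  rintro _ ⟨a, ha, rfl⟩ hmem
  rw [← Set.image_singleton, ← Set.image_sdiff hf] at hmem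
  have hle : closure (f '' (A \ {a})) ≤ (closure (A \ {a})).map f :=
    closure_le.2 (Set.image_mono BooleanSubalgebra.subset_closure)
  obtain ⟨b, hb, hba⟩ := hle hmem
  exact hA a ha (hf hba ▸ hb)

theorem mem_closure_iUnion_of_directed {ι : Type*} [Nonempty ι] {f : ι → Set α}
    (hf : Directed (· ⊆ ·) f) {x : α} (hx : x ∈ closure (⋃ i, f i)) : ∃ i, x ∈ closure (f i) := by
  induction hx using closure_bot_sup_induction with
  | mem x hx =>
    obtain ⟨i, hi⟩ := Set.mem_iUnion.1 hx
    exact ⟨i, BooleanSubalgebra.subset_closure hi⟩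
  | bot => exact ⟨Classical.arbitrary ι, bot_mem⟩
  | sup x _ y _ hx hy =>
    obtain ⟨i, hi⟩ := hx
    obtain ⟨j, hj⟩ := hy
    obtain ⟨k, hik, hjk⟩ := hf i j
    exact ⟨k, sup_mem (closure_mono hik hi) (closure_mono hjk hj)⟩
  | compl x _ hx =>
    obtain ⟨i, hi⟩ := hx
    exact ⟨i, compl_mem hi⟩

theorem irredundant_sUnion {c : Set (Set α)} (hc : IsChain (· ⊆ ·) c)
    (h : ∀ A ∈ c, Irredundant A) : Irredundant (⋃₀ c) := by
  simp only [irredundant_iff] at h ⊢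
  rintro a ⟨A₀, hA₀, ha⟩ hmem
  have : Nonempty c := ⟨⟨A₀, hA₀⟩⟩
  rw [Set.sUnion_eq_iUnion, Set.iUnion_sdiff] at hmem
  have hdir : Directed (· ⊆ ·) fun A : c => (A : Set α) \ {a} := by
    intro A B
    rcases hc.total A.2 B.2 with hAB | hBA
    · exact ⟨B, Set.sdiff_subset_sdiff_left hAB, le_rfl⟩
    · exact ⟨A, le_rfl, Set.sdiff_subset_sdiff_left hBA⟩
  obtain ⟨⟨A, hA⟩, haA⟩ := mem_closure_iUnion_of_directed hdir hmem
  rcases hc.total hA hA₀ with hAA₀ | hA₀A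
  · exact h A₀ hA₀ a ha (closure_mono (Set.sdiff_subset_sdiff_left hAA₀) haA)
  · exact h A hA a (hA₀A ha) haA

theorem exists_sdiff_eq_of_mem_closure_insert {b z : α} {S : Set α}
    (hz : z ∈ closure (insert b S)) : ∃ y ∈ closure S, z \ b = y \ b := by
  induction hz using closure_bot_sup_induction with
  | mem x hx =>
    rcases hx with rfl | hx
    · exact ⟨⊥, bot_mem, by simp⟩
    · exact ⟨x, BooleanSubalgebra.subset_closure hx, rfl⟩
  | bot => exact ⟨⊥, bot_mem, rfl⟩
  | sup x _ y _ hx hy =>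
    obtain ⟨x', hx', hxx'⟩ := hx
    obtain ⟨y', hy', hyy'⟩ := hy
    exact ⟨x' ⊔ y', sup_mem hx' hy', by rw [sup_sdiff, sup_sdiff, hxx', hyy']⟩
  | compl x _ hx =>
    obtain ⟨x', hx', hxx'⟩ := hx
    refine ⟨x'ᶜ, compl_mem hx', ?_⟩
    rw [sdiff_eq, sdiff_eq, ← compl_sup, ← compl_sup, ← sdiff_sup_self, hxx', sdiff_sup_self]

open scoped symmDiff in
theorem Irredundant.insert_of_forall_le_eq_bot {M : Set α} {b : α} (hM : Irredundant M)
    (hb : b ≠ ⊥) (hMb : ∀ d ∈ closure M, d ≤ b → d = ⊥) : Irredundant (insert b M) := by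
  rw [irredundant_iff] at hM ⊢
  have hbM : b ∉ closure M := fun h => hb (hMb b h le_rfl)
  rintro a (rfl | ha) hmem
  · exact hbM (closure_mono (by simp) hmem)
  · have hsub : insert b M \ {a} ⊆ insert b (M \ {a}) := by
      rintro x ⟨rfl | hx, hxa⟩
      exacts [Set.mem_insert _ _, Set.mem_insert_of_mem _ ⟨hx, hxa⟩]
    -- `a` and `y` agree outside `b`, so `a ∆ y` is an element of `closure M` below `b`.
    obtain ⟨y, hy, hay⟩ := exists_sdiff_eq_of_mem_closure_insert (closure_mono hsub hmem)
    have hyM : y ∈ closure M := closure_mono Set.sdiff_subset hy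
    have hdiff : a ∆ y ≤ b := by
      rw [← sdiff_eq_bot_iff, sdiff_eq, inf_symmDiff_distrib_right, ← sdiff_eq, ← sdiff_eq, hay,
        symmDiff_self]
    have hdiffM : a ∆ y ∈ closure M :=
      sup_mem (sdiff_mem (BooleanSubalgebra.subset_closure ha) hyM)
        (sdiff_mem hyM (BooleanSubalgebra.subset_closure ha))
    exact hM a ha (symmDiff_eq_bot.1 (hMb _ hdiffM hdiff) ▸ hy)

theorem exists_irredundant_dense :
    ∃ M : Set α, Irredundant M ∧ ∀ b ≠ ⊥, ∃ d ∈ closure M, d ≠ ⊥ ∧ d ≤ b := by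
  obtain ⟨M, hM⟩ := zorn_subset {A : Set α | Irredundant A} fun c hc hchain =>
    ⟨⋃₀ c, irredundant_sUnion hchain hc, fun _ => Set.subset_sUnion_of_mem⟩
  refine ⟨M, hM.prop, fun b hb => ?_⟩
  by_contra! hMb
  have hins : Irredundant (insert b M) :=
    hM.prop.insert_of_forall_le_eq_bot hb fun d hd hdb => not_ne_iff.1 fun hd0 => hMb d hd hd0 hdb
  have hbM : b ∈ M := (hM.eq_of_subset hins (Set.subset_insert b M)).symm ▸ Set.mem_insert b M
  exact hMb b (BooleanSubalgebra.subset_closure hbM) hb le_rfl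

theorem le_of_forall_dense {D : Set α} (hD : ∀ b ≠ ⊥, ∃ d ∈ D, d ≠ ⊥ ∧ d ≤ b) {a b : α}
    (h : ∀ d ∈ D, d ≤ a → d ≤ b) : a ≤ b := by
  by_contra hab
  obtain ⟨d, hd, hd0, hdab⟩ := hD (a \ b) (sdiff_eq_bot_iff.not.2 hab)
  rw [le_sdiff] at hdab
  exact hd0 (hdab.2.eq_bot_of_le (h d hd hdab.1))

theorem mk_le_two_pow_of_dense {D : Set α} (hD : ∀ b ≠ ⊥, ∃ d ∈ D, d ≠ ⊥ ∧ d ≤ b) :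
    #α ≤ 2 ^ #D := by
  have hinj : Function.Injective fun b : α => {d : D | (d : α) ≤ b} := fun a b hab =>
    le_antisymm (le_of_forall_dense hD fun d hd hda => (Set.ext_iff.1 hab ⟨d, hd⟩).1 hda)
      (le_of_forall_dense hD fun d hd hdb => (Set.ext_iff.1 hab ⟨d, hd⟩).2 hdb)
  exact (mk_le_of_injective hinj).trans_eq mk_set

theorem BooleanSubalgebra.finite_closure {s : Set α} (hs : s.Finite) :
    (closure s : Set α).Finite := by
  set t := latticeClosure (insert ⊥ (insert ⊤ s))
  have ht : t.Finite := ((hs.insert ⊤).insert ⊥).latticeClosure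
  have : Finite t := ht
  refine (Set.finite_range fun u : Finset (t × t) => u.sup fun x => x.1.1 \ x.2.1).subset ?_
  have hst : s ⊆ t := ((Set.subset_insert _ _).trans (Set.subset_insert _ _)).trans
    subset_latticeClosure
  intro x hx
  obtain ⟨u, rfl⟩ := (mem_closure_iff_sup_sdiff isSublattice_latticeClosure
    (subset_latticeClosure (Set.mem_insert _ _))
    (subset_latticeClosure (Set.mem_insert_of_mem _ (Set.mem_insert _ _)))).1 (closure_mono hst hx)
  exact ⟨u, rfl⟩

theorem exists_irredundant_aleph0_le_mk_le_two_pow [Infinite α] :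
    ∃ M : Set α, Irredundant M ∧ ℵ₀ ≤ #M ∧ #α ≤ 2 ^ #M := by
  obtain ⟨M, hM, hdense⟩ := exists_irredundant_dense (α := α)
  have hα : #α ≤ 2 ^ #(BCl M) := BCl_eq_closure M ▸ mk_le_two_pow_of_dense hdense
  have hM_inf : ℵ₀ ≤ #M := by
    by_contra! hfin
    have hBCl : #(BCl M) < ℵ₀ := lt_aleph0_iff_set_finite.2
      (BCl_eq_closure M ▸ BooleanSubalgebra.finite_closure (lt_aleph0_iff_set_finite.1 hfin))
    exact (aleph0_le_mk α).not_gt (hα.trans_lt (power_lt_aleph0 natCast_lt_aleph0 hBCl))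
  refine ⟨M, hM, hM_inf, hα.trans (power_le_power_left two_ne_zero ?_)⟩
  exact (mk_BCl_le M).trans (max_le hM_inf le_rfl)

theorem exists_irredundant_mk_eq_of_pr {κ : Cardinal.{u}} (hκ : Pr κ) (hκ₀ : ℵ₀ < κ)
    (hκα : κ ≤ #α) : ∃ A : Set α, Irredundant A ∧ #A = κ := by
  obtain ⟨S, hS⟩ := le_mk_iff_exists_set.1 hκα
  set L := closure S
  have hL : #L = κ := by
    refine le_antisymm ?_ (hS ▸ mk_le_mk_of_subset BooleanSubalgebra.subset_closure)
    rw [← SetLike.coe_sort_coe, ← BCl_eq_closure, ← hS]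
    exact (mk_BCl_le S).trans (max_le (hS ▸ hκ₀.le) le_rfl)
  obtain ⟨A, hA, hAκ⟩ := hκ L (boolFAlg L) hL (opsCard_boolFAlg_le.trans_lt hκ₀)
  refine ⟨L.subtype '' A, (isFree_boolFAlg_iff.1 hA).image L.subtype_injective, ?_⟩
  rw [mk_image_eq L.subtype_injective, hAκ]

end Boolean

/-- The principle `(*)` implies that every infinite Boolean algebra `B` has an
irredundant subset `A` with `2^|A| = 2^|B|`. -/
theorem stmt_9
    (S1 : ∀ κ : Cardinal.{u}, ℵ₀ ≤ κ →
      WInacc ((2 : Cardinal.{u}) ^ κ) ∧ ∀ l : Cardinal.{u}, κ ≤ l → l < (2 : Cardinal.{u}) ^ κ → (2 : Cardinal.{u}) ^ l = (2 : Cardinal.{u}) ^ κ)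
    (S2 : ∀ κ : Cardinal.{u}, ℵ₀ ≤ κ → Pr ((2 : Cardinal.{u}) ^ κ))
    (B : Type u) [BooleanAlgebra B] [Infinite B] :
    ∃ A : Set B, Irredundant A ∧ (2 : Cardinal.{u}) ^ #A = (2 : Cardinal.{u}) ^ #B := by
  obtain ⟨σ, ⟨hσ, hσB⟩, hσ_min⟩ :=
    wellFounded_lt.has_min {θ : Cardinal | ℵ₀ ≤ θ ∧ (2 : Cardinal) ^ θ = 2 ^ #B}
      ⟨#B, aleph0_le_mk B, rfl⟩
  have hσ_le : σ ≤ #B := not_lt.1 (hσ_min _ ⟨aleph0_le_mk B, rfl⟩)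
  by_cases hstrong : ∀ θ, ℵ₀ ≤ θ → θ < σ → (2 : Cardinal) ^ θ < σ
  · obtain ⟨M, hM, hM_inf, hBM⟩ := exists_irredundant_aleph0_le_mk_le_two_pow (α := B)
    have hσM : σ ≤ #M := not_lt.1 fun h =>
      (hBM.trans_lt ((hstrong _ hM_inf h).trans_le hσ_le)).false
    refine ⟨M, hM, le_antisymm (power_le_power_left two_ne_zero (mk_set_le M)) ?_⟩
    exact hσB.symm.trans_le (power_le_power_left two_ne_zero hσM)
  · push Not at hstrong
    obtain ⟨θ, hθ, hθσ, hσθ⟩ := hstrong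
    have hθB : 2 ^ θ ≤ #B := not_lt.1 fun h =>
      hσ_min θ ⟨hθ, ((S1 θ hθ).2 _ (hθσ.le.trans hσ_le) h).symm⟩ hθσ
    obtain ⟨A, hA, hAθ⟩ := exists_irredundant_mk_eq_of_pr (S2 θ hθ) (hθ.trans_lt (cantor θ)) hθB
    refine ⟨A, hA, ?_⟩
    rw [hAθ, ← hσB, (S1 σ hσ).2 _ hσθ (hσB ▸ hθB.trans_lt (cantor _))]
end

section
/- Assume S1: for every infinite cardinal κ, 2^λ = 2^κ whenever κ ≤ λ < 2^κ. Then for every infinite cardinal ν there is a unique cardinal μ with μ ≤ ν < 2^μ such that either μ = 2^θ for some θ, or μ is a strong limit cardinal; moreover 2^μ = 2^ν. -/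
/-!
Existence: let `μ₀` be the least infinite cardinal with `ν < 2^μ₀`. Either `μ₀` is a strong limit,
or `μ₀ ≤ 2^λ` for some `λ < μ₀`; then minimality of `μ₀` forces `2^λ ≤ ν`, and `μ = 2^λ` works.
Uniqueness: if `μ' < μ` were two such cardinals, then `2^μ' ≤ μ ≤ ν`, against `ν < 2^μ'`. For a
strong limit `μ` this is immediate; for `μ = 2^θ`, S1 applied on `[θ, 2^θ)` or on `[μ', 2^μ')`
(according as `θ ≤ μ'` or `μ' ≤ θ`) gives `2^μ' = 2^θ = μ`.
-/

open Cardinal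

universe u

namespace Cardinal

-- The hypothesis S1.
def TwoPowConstOnIco : Prop :=
  ∀ κ : Cardinal.{u}, ℵ₀ ≤ κ → ∀ l : Cardinal.{u}, κ ≤ l → l < 2 ^ κ → (2 : Cardinal) ^ l = 2 ^ κ

def IsTwoPowerOrStrongLimit (μ : Cardinal.{u}) : Prop :=
  (∃ θ : Cardinal.{u}, 2 ^ θ = μ) ∨ μ.IsStrongLimit

theorem aleph0_le_of_aleph0_le_two_power {θ : Cardinal.{u}} (h : ℵ₀ ≤ 2 ^ θ) : ℵ₀ ≤ θ := by
  by_contra! hθ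
  exact (power_lt_aleph0 (natCast_lt_aleph0) hθ).not_ge h

theorem exists_isTwoPowerOrStrongLimit {ν : Cardinal.{u}} (hν : ℵ₀ ≤ ν) :
    ∃ μ : Cardinal.{u}, ℵ₀ ≤ μ ∧ μ ≤ ν ∧ ν < 2 ^ μ ∧ IsTwoPowerOrStrongLimit μ := by
  set S : Set Cardinal.{u} := {c | ℵ₀ ≤ c ∧ ν < 2 ^ c}
  have hνS : ν ∈ S := ⟨hν, cantor ν⟩
  obtain ⟨hμ₀, hνμ₀⟩ : sInf S ∈ S := csInf_mem ⟨ν, hνS⟩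
  have hmin : ∀ c ∈ S, sInf S ≤ c := fun c hc => csInf_le (OrderBot.bddBelow S) hc
  by_cases hsl : (sInf S).IsStrongLimit
  · exact ⟨sInf S, hμ₀, hmin ν hνS, hνμ₀, Or.inr hsl⟩
  obtain ⟨l, hl, hμ₀l⟩ : ∃ l < sInf S, sInf S ≤ 2 ^ l := by
    simpa [isStrongLimit_iff, IsStrongPrelimit, (aleph0_pos.trans_le hμ₀).ne'] using hsl
  have hlν : 2 ^ l ≤ ν := by
    by_contra! hνl
    exact hl.not_ge (hmin l ⟨aleph0_le_of_aleph0_le_two_power (hμ₀.trans hμ₀l), hνl⟩)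
  exact ⟨2 ^ l, hμ₀.trans hμ₀l, hlν,
    hνμ₀.trans_le (power_le_power_left two_ne_zero hμ₀l), Or.inl ⟨l, rfl⟩⟩

theorem le_of_isTwoPowerOrStrongLimit (hS1 : TwoPowConstOnIco.{u}) {ν μ μ' : Cardinal.{u}}
    (hμ' : ℵ₀ ≤ μ') (hνμ' : ν < 2 ^ μ') (hμν : μ ≤ ν) (hμ : IsTwoPowerOrStrongLimit μ) :
    μ ≤ μ' := by
  by_contra! hlt
  suffices 2 ^ μ' ≤ μ from hνμ'.not_ge (this.trans hμν)
  rcases hμ with ⟨θ, rfl⟩ | hsl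
  · have hθ : ℵ₀ ≤ θ := aleph0_le_of_aleph0_le_two_power (hμ'.trans hlt.le)
    rcases le_total θ μ' with hθμ' | hμ'θ
    · exact (hS1 θ hθ μ' hθμ' hlt).le
    · exact (hS1 μ' hμ' θ hμ'θ (((cantor θ).trans_le hμν).trans hνμ')).ge
  · exact (hsl.isStrongPrelimit hlt).le

end Cardinal

/-- Under S1, every infinite cardinal `ν` admits a unique `μ` with `μ ≤ ν < 2^μ`
such that `μ` is a power `2^θ` or a strong limit; moreover `2^μ = 2^ν`. -/
theorem stmt_10
    (S1 : ∀ κ : Cardinal.{u}, ℵ₀ ≤ κ →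
      ∀ l : Cardinal.{u}, κ ≤ l → l < (2 : Cardinal.{u}) ^ κ → (2 : Cardinal.{u}) ^ l = (2 : Cardinal.{u}) ^ κ)
    (ν : Cardinal.{u}) (hν : ℵ₀ ≤ ν) :
    ∃ μ : Cardinal.{u},
      (ℵ₀ ≤ μ ∧ μ ≤ ν ∧ ν < (2 : Cardinal.{u}) ^ μ ∧
        ((∃ θ : Cardinal.{u}, (2 : Cardinal.{u}) ^ θ = μ) ∨ μ.IsStrongLimit)) ∧
      (2 : Cardinal.{u}) ^ μ = (2 : Cardinal.{u}) ^ ν ∧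
      ∀ μ' : Cardinal.{u},
        (ℵ₀ ≤ μ' ∧ μ' ≤ ν ∧ ν < (2 : Cardinal.{u}) ^ μ' ∧
          ((∃ θ : Cardinal.{u}, (2 : Cardinal.{u}) ^ θ = μ') ∨ μ'.IsStrongLimit)) → μ' = μ := by
  obtain ⟨μ, hμ, hμν, hνμ, hpow⟩ := exists_isTwoPowerOrStrongLimit hν
  refine ⟨μ, ⟨hμ, hμν, hνμ, hpow⟩, (S1 μ hμ ν hμν hνμ).symm, ?_⟩
  rintro μ' ⟨hμ', hμ'ν, hνμ', hpow'⟩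
  exact le_antisymm (le_of_isTwoPowerOrStrongLimit S1 hμ hνμ hμ'ν hpow')
    (le_of_isTwoPowerOrStrongLimit S1 hμ' hνμ' hμν hpow)
end

section
/- Suppose Pr(κ) holds and P is a forcing notion with the μ⁺-chain condition for some μ < κ. Then Pr(κ) holds in the generic extension by P. -/
open Cardinal

universe u

/-- Two forcing conditions are compatible if they have a common extension. -/
def Compat {P : Type u} [Preorder P] (p q : P) : Prop :=
  ∃ r, r ≤ p ∧ r ≤ q

/-! Conditions forcing different values of `Ḟ_i(a)` are incompatible, so by the chain condition
`Ḟ_i(a)` has at most `μ` possible values. Enumerating them gives `#ι * μ < κ` ground-model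
operations which pointwise cover every realization of the named algebra; a set free for the
ground-model algebra is then free for each realization. -/

namespace FAlg

variable {M : Type u}

def ofFamily {ι : Type*} (n : ι → ℕ) (F : ∀ i, (Fin (n i) → M) → M) : FAlg M :=
  ⟨fun m => {f | ∃ (i : ι) (h : n i = m),
    ∀ x : Fin m → M, f x = F i fun j => x (Fin.cast h j)}⟩

theorem subset_Cl (A : FAlg M) (B : Set M) : B ⊆ A.Cl B :=
  fun _ ha _ hS => hS.2 ha

theorem isSubalg_Cl (A : FAlg M) (B : Set M) : A.IsSubalg (A.Cl B) :=
  fun _ f hf x hx _ hS => hS.1 f hf x fun i => hx i _ hS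

theorem apply_mem_Cl_ofFamily {ι : Type*} {n : ι → ℕ} {F : ∀ i, (Fin (n i) → M) → M}
    {B : Set M} (i : ι) {x : Fin (n i) → M} (hx : ∀ j, x j ∈ (ofFamily n F).Cl B) :
    F i x ∈ (ofFamily n F).Cl B :=
  isSubalg_Cl (ofFamily n F) B (F i) ⟨i, rfl, fun _ => rfl⟩ x hx

theorem opsCard_ofFamily_le {ι : Type u} (n : ι → ℕ) (F : ∀ i, (Fin (n i) → M) → M) :
    (ofFamily n F).opsCard ≤ #ι := by
  refine mk_le_of_surjective
    (f := fun i => Sigma.mk (β := fun m => (ofFamily n F).ops m) (n i)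
      ⟨F i, i, rfl, fun _ => rfl⟩) ?_
  rintro ⟨m, f, i, rfl, hf⟩
  exact ⟨i, Sigma.ext rfl (heq_of_eq (Subtype.ext (funext hf).symm))⟩

theorem IsFree.of_forall_exists_apply_eq {A A' : FAlg M} {B : Set M}
    (hA : ∀ m, ∀ f ∈ A'.ops m, ∀ x, ∃ f' ∈ A.ops m, f x = f' x) (hB : A.IsFree B) :
    A'.IsFree B := by
  have hsub : ∀ C, A'.IsSubalg (A.Cl C) := fun C m f hf x hx => by
    obtain ⟨f', hf', hff'⟩ := hA m f hf x
    exact hff' ▸ isSubalg_Cl A _ f' hf' x hx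
  exact fun a ha hCl => hB a ha (hCl _ ⟨hsub _, subset_Cl A _⟩)

theorem IsFree.ofFamily_of_mem_range {ι T : Type*} {n : ι → ℕ}
    {E : ∀ i, (Fin (n i) → M) → T → M} {g : ∀ i, (Fin (n i) → M) → M} {B : Set M}
    (hg : ∀ i a, g i a ∈ Set.range (E i a))
    (hB : (ofFamily (fun k : ι × T => n k.1) fun k a => E k.1 a k.2).IsFree B) :
    (ofFamily n g).IsFree B := by
  refine hB.of_forall_exists_apply_eq fun m f ⟨i, h, hf⟩ x => ?_
  obtain ⟨t, ht⟩ := hg i fun j => x (Fin.cast h j)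
  exact ⟨_, ⟨(i, t), h, fun _ => rfl⟩, by rw [hf, ← ht]⟩

end FAlg

section Cardinal

variable {κ : Cardinal.{u}}

/-- A constant `c` lies in every closure, so no free set contains it; on a finite carrier
this rules out a free set of full size. -/
theorem Pr.aleph0_le (hPr : Pr κ) (h1 : 1 < κ) : ℵ₀ ≤ κ := by
  by_contra! hfin
  obtain ⟨m, rfl⟩ := lt_aleph0.1 hfin
  have : Nonempty (m : Cardinal.{u}).out := by
    rw [← mk_ne_zero_iff, mk_out]
    exact (zero_lt_one.trans h1).ne'
  let c : (m : Cardinal.{u}).out := Classical.arbitrary _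
  let A := FAlg.ofFamily (fun _ : PUnit.{u + 1} => 0) fun _ _ => c
  obtain ⟨B, hfree, hB⟩ :=
    hPr _ A (mk_out _) ((FAlg.opsCard_ofFamily_le _ _).trans_lt (by simpa using h1))
  have hc : c ∉ B := fun hcB =>
    hfree c hcB (FAlg.apply_mem_Cl_ofFamily PUnit.unit (x := Fin.elim0) fun j => j.elim0)
  have : ((m + 1 : ℕ) : Cardinal.{u}) ≤ m :=
    calc ((m + 1 : ℕ) : Cardinal.{u}) = #(insert c B : Set _) := by
          rw [mk_insert hc, hB, Nat.cast_succ]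
      _ ≤ #(m : Cardinal.{u}).out := mk_set_le _
      _ = m := mk_out _
  exact absurd (Nat.cast_le.1 this) (by omega)

theorem Pr.mul_lt (hPr : Pr κ) {a b : Cardinal.{u}} (ha : a < κ) (hb : b < κ) : a * b < κ := by
  rcases eq_or_ne a 0 with rfl | ha0
  · simpa using pos_of_gt hb
  rcases eq_or_ne b 0 with rfl | hb0
  · simpa using pos_of_gt ha
  have h1 : 1 < κ := (Cardinal.one_le_iff_ne_zero.2 ha0).trans_lt ha
  exact mul_lt_of_lt (hPr.aleph0_le h1) ha hb

end Cardinal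

theorem exists_subset_range_of_mk_le {M T : Type u} [Nonempty M] {S : Set M} (h : #S ≤ #T) :
    ∃ e : T → M, S ⊆ Set.range e := by
  obtain ⟨emb⟩ := h
  exact ⟨Function.extend emb Subtype.val fun _ => Classical.arbitrary M,
    fun b hb => ⟨emb ⟨b, hb⟩, emb.injective.extend_apply _ _ _⟩⟩

theorem mk_setOf_exists_forces_le {P β : Type u} [Preorder P] {μ : Cardinal.{u}}
    (hcc : ∀ A : Set P, A.Pairwise (fun p q => ¬Compat p q) → #A ≤ μ)
    (forces : P → β → Prop)
    (hcoh : ∀ b b' p q, forces p b → forces q b' → b ≠ b' → ¬Compat p q) :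
    #{b | ∃ p, forces p b} ≤ μ := by
  choose p hp using fun b : {b | ∃ p, forces p b} => b.2
  have hanti : (Set.range p).Pairwise fun p q => ¬Compat p q := by
    rintro _ ⟨b, rfl⟩ _ ⟨b', rfl⟩ hne
    exact hcoh b b' _ _ (hp b) (hp b') fun h => hne (congrArg p (Subtype.ext h))
  have hinj : Function.Injective p := fun b b' h => by_contra fun hne =>
    hcoh b b' _ _ (hp b) (hp b') (fun e => hne (Subtype.ext e)) ⟨p b, le_rfl, h ▸ le_rfl⟩
  exact mk_range_eq p hinj ▸ hcc _ hanti

/-- `forces i p a b` stands for `p ⊩ Ḟ_i(a) = b`, where the `Ḟ_i` name the operations of an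
algebra on the ground-model set `M`; a realization `g` of the names is an algebra in a generic
extension. -/
theorem stmt_16_general (κ μ : Cardinal.{u}) (hμκ : μ < κ) (hPr : Pr κ)
    (P : Type u) [Preorder P]
    (hcc : ∀ A : Set P, (∀ p ∈ A, ∀ q ∈ A, p ≠ q → ¬Compat p q) → #A ≤ μ)
    (M : Type u) (hM : #M = κ)
    (ι : Type u) (hι : #ι < κ) (n : ι → ℕ)
    (forces : ∀ i : ι, P → (Fin (n i) → M) → M → Prop)
    (hcoh : ∀ (i : ι) (a : Fin (n i) → M) (b b' : M) (p q : P),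
      forces i p a b → forces i q a b' → b ≠ b' → ¬Compat p q) :
    ∃ I : Set M, #I = κ ∧
      ∀ g : (i : ι) → (Fin (n i) → M) → M,
        (∀ (i : ι) (a : Fin (n i) → M), ∃ p : P, forces i p a (g i a)) →
        FAlg.IsFree
          ⟨fun m => {f | ∃ (i : ι) (h : n i = m),
            ∀ x : Fin m → M, f x = g i fun j => x (Fin.cast h j)}⟩ I := by
  have : Nonempty M := by
    rw [← mk_ne_zero_iff, hM]
    exact (pos_of_gt hμκ).ne'
  choose E hE using fun i a => exists_subset_range_of_mk_le (T := μ.out)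
    ((mk_setOf_exists_forces_le hcc (forces i · a) (hcoh i a)).trans_eq (mk_out μ).symm)
  let A := FAlg.ofFamily (fun k : ι × μ.out => n k.1) fun k a => E k.1 a k.2
  have hA : A.opsCard < κ := by
    refine (FAlg.opsCard_ofFamily_le _ _).trans_lt ?_
    rw [mk_prod, lift_id, lift_id, mk_out]
    exact hPr.mul_lt hι hμκ
  obtain ⟨I, hfree, hI⟩ := hPr M A hM hA
  exact ⟨I, hI, fun g hg => hfree.ofFamily_of_mem_range fun i a => hE i a (hg i a)⟩

/-- `Pr κ` is preserved by forcing with the `μ⁺`-chain condition for `μ < κ`: given names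
`Ḟ_i` for the operations of an algebra on a ground-model set `M` of size `κ` (described by
the relation `forces i p a b` meaning `p ⊩ Ḟ_i(a) = b`), there is a ground-model set `I`
of size `κ` which is free for every possible realization of the named algebra. -/
theorem stmt_16 (κ μ : Cardinal.{u}) (hμκ : μ < κ) (hPr : Pr κ)
    (P : Type u) [Preorder P]
    (hcc : ∀ A : Set P, (∀ p ∈ A, ∀ q ∈ A, p ≠ q → ¬Compat p q) → #A ≤ μ)
    (M : Type u) (hM : #M = κ)
    (ι : Type u) (hι : #ι < κ) (n : ι → ℕ)
    (forces : ∀ i : ι, P → (Fin (n i) → M) → M → Prop)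
    (htotal : ∀ (i : ι) (a : Fin (n i) → M) (p : P),
      ∃ q b, q ≤ p ∧ forces i q a b)
    (hcoh : ∀ (i : ι) (a : Fin (n i) → M) (b b' : M) (p q : P),
      forces i p a b → forces i q a b' → b ≠ b' → ¬Compat p q) :
    ∃ I : Set M, #I = κ ∧
      ∀ g : (i : ι) → (Fin (n i) → M) → M,
        (∀ (i : ι) (a : Fin (n i) → M), ∃ p : P, forces i p a (g i a)) →
        FAlg.IsFree
          ⟨fun m => {f | ∃ (i : ι) (h : n i = m),
            ∀ x : Fin m → M, f x = g i fun j => x (Fin.cast h j)}⟩ I :=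
  stmt_16_general κ μ hμκ hPr P hcc M hM ι hι n forces hcoh
end
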